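/- arXiv:2011.03724 — 6 statements merged into one kernel-verified Lean document; each statement's English description precedes it below -/
import Mathlib

section
/- Let M be a finite concurrent game model and M^T its unwinding with action atoms as described. For every strategy profile with temporary coalitions (SPTC) s for M^T, the formula δ̃(s) is satisfied at w_I^T in the model (M^T)^{X(s)}_s in which each atomic proposition s_Γ is evaluated to X_Γ(s); that is: (M^T)^{X(s)}_s, w_I^T ⊨ ∀□∃◯ s̃_Ag ∧ ⋀_{Γ⊆Ag} ∀□( ∀◯¬s_Γ ∨ ⋁_{a∈Act_Γ} ∀◯(s_Γ ⇔ â) ). -/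
/-- A concurrent game model over states `W`, players `Ag`, atomic propositions `AP`
and actions `Act i` for each player `i`.  Global decisions are elements of
`∀ i, Act i` (i.e. `Act_Ag`). -/
structure CGM (W Ag AP : Type) (Act : Ag → Type) where
  wI : W
  o : W → (∀ i, Act i) → W
  V : W → AP → Prop

/-- A state of the unwinding `M^T` of a CGM: a finite alternating sequence
`w⁰a¹w¹⋯aⁿwⁿ`, encoded as the initial state `w⁰` together with the list
`[(a¹,w¹),…,(aⁿ,wⁿ)]`. -/
structure UnwState (W A : Type) where
  head : W
  rest : List (A × W)

namespace UnwState

/-- The last state `wⁿ` of the alternating sequence `w⁰a¹w¹⋯aⁿwⁿ`. -/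
def last {W A : Type} (u : UnwState W A) : W :=
  ((u.rest.getLast?).map Prod.snd).getD u.head

/-- The last global action `aⁿ` of `w⁰a¹w¹⋯aⁿwⁿ` (`none` for the one-element sequence `w⁰`). -/
def lastAct {W A : Type} (u : UnwState W A) : Option A :=
  (u.rest.getLast?).map Prod.fst

end UnwState

/-- The outcome function `o^T` of the unwinding:
`o^T(w⁰a¹⋯aⁿwⁿ, b) = w⁰a¹⋯aⁿwⁿ b o(wⁿ, b)`. -/
def oT {W A : Type} (o : W → A → W) (u : UnwState W A) (b : A) : UnwState W A :=
  ⟨u.head, u.rest ++ [(b, o u.last b)]⟩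

/-- The initial state `w_I^T` of the unwinding. -/
def initT {W Ag AP : Type} {Act : Ag → Type} (M : CGM W Ag AP Act) :
    UnwState W (∀ i, Act i) :=
  ⟨M.wI, []⟩

/-- The one-step transition relation of the unwinding `M^T`:
`u →^T u'` iff `u' = o^T(u, a)` for some global action `a`. -/
def stepT {W A : Type} (o : W → A → W) : UnwState W A → UnwState W A → Prop :=
  fun u u' => ∃ a : A, u' = oT o u a

/-- The one-step transition relation of a CGM: `w → w'` iff `w' = o(w, a)`
for some global action `a`. -/
def stepM {W Ag AP : Type} {Act : Ag → Type} (M : CGM W Ag AP Act) : W → W → Prop :=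
  fun w w' => ∃ a : ∀ i, Act i, w' = M.o w a

/-- An infinite play of the transition system with one-step relation `step`,
starting at `init`. -/
def InfP {S : Type} (step : S → S → Prop) (init : S) (v : ℕ → S) : Prop :=
  v 0 = init ∧ ∀ k : ℕ, step (v k) (v (k + 1))

/-- The infinite continuations of the finite play `v⁰…v^k`. -/
def ExtP {S : Type} (step : S → S → Prop) (v : ℕ → S) (k : ℕ) (w : ℕ → S) : Prop :=
  (∀ j ≤ k, w j = v j) ∧ ∀ j : ℕ, step (w j) (w (j + 1))

/-- `C` is an exhaustive partition of the (finite) set of players into pairwise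
disjoint nonempty coalitions. -/
def IsPartition {Ag : Type} [Fintype Ag] (C : Finset (Finset Ag)) : Prop :=
  (∀ Γ ∈ C, Γ.Nonempty) ∧
  (∀ Γ ∈ C, ∀ Δ ∈ C, Γ ≠ Δ → Disjoint Γ Δ) ∧
  (∀ i : Ag, ∃ Γ ∈ C, i ∈ Γ)

/-- The set `X_Γ(s)` of states of `M^T` reached by a transition in which the coalition
`Γ` occurs in the coalition structure prescribed by the SPTC `s` and the members of `Γ`
act as prescribed by `s`, the remaining players acting arbitrarily.  (In `M^T`, finite
plays from `w_I^T` are in one-to-one correspondence with the reachable states, so an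
SPTC is given as a function of the reachable states.) -/
def XSet {W Ag AP : Type} {Act : Ag → Type} [Fintype Ag] [DecidableEq Ag]
    (M : CGM W Ag AP Act)
    (s : UnwState W (∀ i, Act i) → (∀ i, Act i) × Finset (Finset Ag))
    (Γ : Finset Ag) : Set (UnwState W (∀ i, Act i)) :=
  { t | ∃ u : UnwState W (∀ i, Act i),
      Relation.ReflTransGen (stepT M.o) (initT M) u ∧ Γ ∈ (s u).2 ∧
      ∃ b : ∀ i, Act i,
        t = oT M.o u (fun i => if i ∈ Γ then (s u).1 i else b i) }

/-- The semantics of the formulas `s̃_Γ`, defined by recursion on `Γ`: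
`s̃_Γ` holds at a state `t` iff no coalition atom overlapping `Γ` and extending beyond
`Γ` holds at `t`, and either `s_Γ` holds at `t` and no atom of a proper nonempty
subcoalition of `Γ` does, or `Γ` splits into `Δ` and `Γ∖Δ` with `s̃_Δ` and `s̃_{Γ∖Δ}`
both holding at `t`. -/
def Tilde {Ag S : Type} [DecidableEq Ag] (X : Finset Ag → Set S) :
    Finset Ag → S → Prop
  | Γ, t =>
    (∀ Γ' : Finset Ag, (Γ' ∩ Γ).Nonempty → (Γ' \ Γ).Nonempty → t ∉ X Γ') ∧
    ((t ∈ X Γ ∧ ∀ Δ : Finset Ag, Δ.Nonempty → Δ ⊂ Γ → t ∉ X Δ) ∨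
      ∃ Δ : Finset Ag, ∃ _ : Δ.Nonempty, ∃ _ : Δ ⊂ Γ,
        Tilde X Δ t ∧ Tilde X (Γ \ Δ) t)
termination_by Γ _ => Γ.card
decreasing_by
  · exact Finset.card_lt_card ‹Δ ⊂ Γ›
  · exact Finset.card_lt_card (Finset.sdiff_ssubset ‹Δ ⊂ Γ›.subset ‹Δ.Nonempty›)

/-- The action atom `c ∈ Act_i` holds at a state of `M^T` iff the last global action
exists and has `c` as its `i`-th component. -/
def ActAtom {W Ag : Type} {Act : Ag → Type} (i : Ag) (c : Act i)
    (t : UnwState W (∀ j, Act j)) : Prop :=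
  ∃ g : ∀ j, Act j, t.lastAct = some g ∧ g i = c

/- ### Auxiliary lemmas -/

/-- `oT` decompositions are unique. -/
lemma oT_inj {W A : Type} (o : W → A → W) {u u' : UnwState W A} {b b' : A}
    (h : oT o u b = oT o u' b') : u = u' ∧ b = b' := by
  have hh : u.head = u'.head := congrArg (fun x => x.head) h
  have hr : u.rest ++ [(b, o u.last b)] = u'.rest ++ [(b', o u'.last b')] :=
    congrArg (fun x => x.rest) h
  obtain ⟨hr1, hr2⟩ := List.append_inj' hr rfl
  have hb : b = b' := congrArg Prod.fst (List.head_eq_of_cons_eq hr2)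
  refine ⟨?_, hb⟩
  cases u; cases u'; simp_all

lemma lastAct_oT {W A : Type} (o : W → A → W) (u : UnwState W A) (b : A) :
    (oT o u b).lastAct = some b := by
  simp [oT, UnwState.lastAct, List.getLast?_concat]

/-- Characterisation of membership in `X_Γ(s)` for a one-step successor of a
reachable state. -/
lemma mem_XSet_iff {W Ag AP : Type} {Act : Ag → Type} [Fintype Ag] [DecidableEq Ag]
    (M : CGM W Ag AP Act)
    (s : UnwState W (∀ i, Act i) → (∀ i, Act i) × Finset (Finset Ag))
    {u : UnwState W (∀ i, Act i)}
    (hu : Relation.ReflTransGen (stepT M.o) (initT M) u)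
    (c : ∀ i, Act i) (Γ : Finset Ag) :
    oT M.o u c ∈ XSet M s Γ ↔ Γ ∈ (s u).2 ∧ ∀ i ∈ Γ, c i = (s u).1 i := by
  constructor
  · rintro ⟨u', hu', hΓ, b, heq⟩
    obtain ⟨huu, hcc⟩ := oT_inj M.o heq
    subst huu
    refine ⟨hΓ, fun i hi => ?_⟩
    have := congrFun hcc i
    simpa [hi] using this
  · rintro ⟨hΓ, hc⟩
    refine ⟨u, hu, hΓ, c, ?_⟩
    congr 1
    funext i
    by_cases hi : i ∈ Γ
    · simp [hi, hc i hi]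
    · simp [hi]

/-- If the coalitions whose atom holds at `t` are exactly the members of a family `C`
of pairwise disjoint nonempty sets, then `s̃_Γ` holds at `t` for `Γ` the union of any
nonempty subfamily `D ⊆ C`. -/
lemma tilde_of_partition {Ag S : Type} [DecidableEq Ag] (X : Finset Ag → Set S) (t : S)
    (C : Finset (Finset Ag))
    (hmem : ∀ Δ : Finset Ag, t ∈ X Δ ↔ Δ ∈ C)
    (hne : ∀ Δ ∈ C, Finset.Nonempty Δ)
    (hdisj : ∀ Γ ∈ C, ∀ Δ ∈ C, Γ ≠ Δ → Disjoint Γ Δ) :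
    ∀ D : Finset (Finset Ag), D ⊆ C → D.Nonempty → Tilde X (D.sup id) t := by
  intro D
  induction D using Finset.strongInduction with
  | _ D ih =>
    intro hDC hDne
    obtain ⟨Δ₀, hΔ₀⟩ := hDne
    have key : ∀ Δ ∈ D, ∀ i ∈ Δ, i ∈ D.sup id := by
      intro Δ hΔ i hi
      exact Finset.mem_sup.2 ⟨Δ, hΔ, hi⟩
    have cond1 : ∀ Γ' : Finset Ag, (Γ' ∩ D.sup id).Nonempty → (Γ' \ D.sup id).Nonempty →
        t ∉ X Γ' := by
      intro Γ' h1 h2 hmem'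
      have hΓ'C : Γ' ∈ C := (hmem Γ').1 hmem'
      obtain ⟨i, hi⟩ := h1
      have hiΓ' : i ∈ Γ' := (Finset.mem_inter.1 hi).1
      have hisup : i ∈ D.sup id := (Finset.mem_inter.1 hi).2
      obtain ⟨Δ, hΔD, hiΔ⟩ := Finset.mem_sup.1 hisup
      have hΔC : Δ ∈ C := hDC hΔD
      have hΓ'Δ : Γ' = Δ := by
        by_contra hne'
        simpa using (hdisj Γ' hΓ'C Δ hΔC hne').le_bot (Finset.mem_inter.2 ⟨hiΓ', hiΔ⟩)
      obtain ⟨j, hj⟩ := h2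
      exact (Finset.mem_sdiff.1 hj).2
        (key Δ hΔD j (hΓ'Δ ▸ (Finset.mem_sdiff.1 hj).1))
    rw [Tilde]
    refine ⟨cond1, ?_⟩
    by_cases hsing : D = {Δ₀}
    · subst hsing
      have hsup : ({Δ₀} : Finset (Finset Ag)).sup id = Δ₀ := Finset.sup_singleton
      left
      rw [hsup]
      refine ⟨(hmem Δ₀).2 (hDC (Finset.mem_singleton_self Δ₀)), ?_⟩
      intro Δ hΔne hΔsub hmem'
      have hΔC : Δ ∈ C := (hmem Δ).1 hmem'
      obtain ⟨i, hi⟩ := hΔne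
      have hiΔ₀ : i ∈ Δ₀ := hΔsub.subset hi
      have hΔeq : Δ = Δ₀ := by
        by_contra hne'
        simpa using (hdisj Δ hΔC Δ₀ (hDC (Finset.mem_singleton_self Δ₀)) hne').le_bot
          (Finset.mem_inter.2 ⟨hi, hiΔ₀⟩)
      exact (ne_of_ssubset hΔsub) hΔeq
    · right
      have herase : (D.erase Δ₀).Nonempty := by
        rcases Finset.eq_empty_or_nonempty (D.erase Δ₀) with h | h
        · exact absurd (Finset.eq_singleton_iff_unique_mem.2
            ⟨hΔ₀, fun x hx => by
              by_contra hne'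
              exact (Finset.notMem_empty x) (h ▸ Finset.mem_erase.2 ⟨hne', hx⟩)⟩) hsing
        · exact h
      obtain ⟨Δ₁, hΔ₁⟩ := herase
      have hΔ₁D : Δ₁ ∈ D := Finset.mem_of_mem_erase hΔ₁
      have hΔ₁ne : Δ₁ ≠ Δ₀ := Finset.ne_of_mem_erase hΔ₁
      have hΔ₀ne : Δ₀.Nonempty := hne Δ₀ (hDC hΔ₀)
      have hΔ₀sub : Δ₀ ⊆ D.sup id := fun i hi => key Δ₀ hΔ₀ i hi
      have hΔ₀ssub : Δ₀ ⊂ D.sup id := by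
        refine Finset.ssubset_iff_of_subset hΔ₀sub |>.2 ?_
        obtain ⟨j, hj⟩ := hne Δ₁ (hDC hΔ₁D)
        refine ⟨j, key Δ₁ hΔ₁D j hj, fun hjΔ₀ => ?_⟩
        simpa using (hdisj Δ₁ (hDC hΔ₁D) Δ₀ (hDC hΔ₀) hΔ₁ne).le_bot
          (Finset.mem_inter.2 ⟨hj, hjΔ₀⟩)
      have hsdiff : D.sup id \ Δ₀ = (D.erase Δ₀).sup id := by
        ext i
        simp only [Finset.mem_sdiff, Finset.mem_sup, Finset.mem_erase, id]
        constructor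
        · rintro ⟨⟨Δ, hΔD, hiΔ⟩, hiΔ₀⟩
          refine ⟨Δ, ⟨fun h => hiΔ₀ (h ▸ hiΔ), hΔD⟩, hiΔ⟩
        · rintro ⟨Δ, ⟨hΔne', hΔD⟩, hiΔ⟩
          refine ⟨⟨Δ, hΔD, hiΔ⟩, fun hiΔ₀ => ?_⟩
          simpa using (hdisj Δ (hDC hΔD) Δ₀ (hDC hΔ₀) hΔne').le_bot
            (Finset.mem_inter.2 ⟨hiΔ, hiΔ₀⟩)
      refine ⟨Δ₀, hΔ₀ne, hΔ₀ssub, ?_, ?_⟩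
      · have h1 : Tilde X (({Δ₀} : Finset (Finset Ag)).sup id) t := by
          refine ih {Δ₀} ?_ (Finset.singleton_subset_iff.2 (hDC hΔ₀))
            ⟨Δ₀, Finset.mem_singleton_self Δ₀⟩
          refine Finset.ssubset_iff_of_subset (Finset.singleton_subset_iff.2 hΔ₀) |>.2
            ⟨Δ₁, hΔ₁D, by simpa using hΔ₁ne⟩
        rwa [Finset.sup_singleton] at h1
      · have h1 : Tilde X ((D.erase Δ₀).sup id) t :=
          ih (D.erase Δ₀) (Finset.erase_ssubset hΔ₀)
            (fun Δ hΔ => hDC (Finset.mem_of_mem_erase hΔ)) ⟨Δ₁, hΔ₁⟩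
        rwa [hsdiff]

/-- States along an infinite play from `w_I^T` are reachable. -/
lemma reach_of_InfP {S : Type} {step : S → S → Prop} {init : S} {w : ℕ → S}
    (h : InfP step init w) (n : ℕ) : Relation.ReflTransGen step init (w n) := by
  induction n with
  | zero => rw [h.1]
  | succ n ih => exact ih.tail (h.2 n)

/-- A step-by-step default continuation. -/
def extSeq {W A : Type} (o : W → A → W) (d : A) (t0 : UnwState W A) :
    ℕ → UnwState W A
  | 0 => t0
  | k + 1 => oT o (extSeq o d t0 k) d

/-- For every SPTC `s` of a finite CGM `M`, the formula `δ̃(s)` is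
satisfied at `w_I^T` in `(M^T)^{X(s)}_s`, i.e. (unfolding the semantics of
`∀□∃◯ s̃_Ag ∧ ⋀_Γ ∀□(∀◯¬s_Γ ∨ ⋁_{a∈Act_Γ} ∀◯(s_Γ ⇔ â))` at the initial
one-state play of `M^T`, valuating each `s_Γ` as `X_Γ(s)`): every finite play can be
extended one step so that `s̃_Ag` holds, and at every finite play, either no one-step
continuation realises `s_Γ`, or some joint action `a ∈ Act_Γ` is such that the
one-step continuations realising `s_Γ` are exactly those realising `â`. -/
theorem delta_tilde_satisfied {W Ag AP : Type} {Act : Ag → Type}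
    [Fintype W] [Fintype Ag] [Nonempty Ag] [DecidableEq Ag]
    [∀ i, Fintype (Act i)] [∀ i, Nonempty (Act i)]
    (M : CGM W Ag AP Act)
    (s : UnwState W (∀ i, Act i) → (∀ i, Act i) × Finset (Finset Ag))
    (hs : ∀ u, IsPartition (s u).2) :
    -- ∀□∃◯ s̃_Ag
    (∀ w : ℕ → UnwState W (∀ i, Act i), InfP (stepT M.o) (initT M) w →
      ∀ n : ℕ, ∃ w' : ℕ → UnwState W (∀ i, Act i),
        ExtP (stepT M.o) w n w' ∧ Tilde (XSet M s) Finset.univ (w' (n + 1))) ∧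
    -- ⋀_{Γ⊆Ag} ∀□( ∀◯¬s_Γ ∨ ⋁_{a∈Act_Γ} ∀◯(s_Γ ⇔ â) )
    (∀ Γ : Finset Ag, ∀ w : ℕ → UnwState W (∀ i, Act i),
      InfP (stepT M.o) (initT M) w → ∀ n : ℕ,
        (∀ w' : ℕ → UnwState W (∀ i, Act i), ExtP (stepT M.o) w n w' →
          w' (n + 1) ∉ XSet M s Γ) ∨
        (∃ a : ∀ i : {x // x ∈ Γ}, Act i.val,
          ∀ w' : ℕ → UnwState W (∀ i, Act i), ExtP (stepT M.o) w n w' →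
            (w' (n + 1) ∈ XSet M s Γ ↔
              ∀ i : {x // x ∈ Γ}, ActAtom i.val (a i) (w' (n + 1))))) := by
  classical
  constructor
  · -- ∀□∃◯ s̃_Ag
    intro w hw n
    set u := w n with hu
    have hreach : Relation.ReflTransGen (stepT M.o) (initT M) u := reach_of_InfP hw n
    set c := (s u).1 with hc
    set d : ∀ i, Act i := fun i => Classical.arbitrary (Act i) with hd
    refine ⟨fun j => if j ≤ n then w j else extSeq M.o d (oT M.o u c) (j - (n + 1)), ?_, ?_⟩
    · constructor
      · intro j hj; simp [hj]
      · intro j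
        rcases lt_trichotomy j n with h | h | h
        · have h1 : j ≤ n := le_of_lt h
          have h2 : j + 1 ≤ n := h
          simp only [h1, h2, if_pos]
          exact hw.2 j
        · subst h
          have h1 : ¬ (j + 1 ≤ j) := by omega
          have h2 : j + 1 - (j + 1) = 0 := by omega
          simp only [le_refl, if_pos, h1, if_neg, h2]
          exact ⟨c, rfl⟩
        · have h1 : ¬ (j ≤ n) := by omega
          have h2 : ¬ (j + 1 ≤ n) := by omega
          have h3 : j + 1 - (n + 1) = (j - (n + 1)) + 1 := by omega
          simp only [h1, h2, if_neg, h3]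
          exact ⟨d, rfl⟩
    · have h1 : ¬ (n + 1 ≤ n) := by omega
      have h2 : n + 1 - (n + 1) = 0 := by omega
      simp only [h1, if_neg, h2]
      show Tilde (XSet M s) Finset.univ (extSeq M.o d (oT M.o u c) 0)
      show Tilde (XSet M s) Finset.univ (oT M.o u c)
      obtain ⟨hne, hdisj, hcov⟩ := hs u
      have hmem : ∀ Δ : Finset Ag, oT M.o u c ∈ XSet M s Δ ↔ Δ ∈ (s u).2 := by
        intro Δ
        rw [mem_XSet_iff M s hreach c Δ]
        simp [hc]
      have hsup : ((s u).2).sup id = Finset.univ := by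
        apply Finset.eq_univ_of_forall
        intro i
        obtain ⟨Γ, hΓ, hiΓ⟩ := hcov i
        exact Finset.mem_sup.2 ⟨Γ, hΓ, hiΓ⟩
      have hCne : ((s u).2).Nonempty := by
        obtain ⟨Γ, hΓ, _⟩ := hcov (Classical.arbitrary Ag)
        exact ⟨Γ, hΓ⟩
      have := tilde_of_partition (XSet M s) (oT M.o u c) (s u).2 hmem hne hdisj
        (s u).2 (le_refl _) hCne
      rwa [hsup] at this
  · -- second conjunct
    intro Γ w hw n
    set u := w n with hu
    have hreach : Relation.ReflTransGen (stepT M.o) (initT M) u := reach_of_InfP hw n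
    have hstep : ∀ w' : ℕ → UnwState W (∀ i, Act i), ExtP (stepT M.o) w n w' →
        ∃ cc : ∀ i, Act i, w' (n + 1) = oT M.o u cc := by
      intro w' hw'
      obtain ⟨cc, hcc⟩ := hw'.2 n
      exact ⟨cc, by rw [hcc, hw'.1 n (le_refl n)]⟩
    by_cases hΓ : Γ ∈ (s u).2
    · right
      refine ⟨fun i => (s u).1 i.val, ?_⟩
      intro w' hw'
      obtain ⟨cc, hcc⟩ := hstep w' hw'
      rw [hcc, mem_XSet_iff M s hreach cc Γ]
      constructor
      · rintro ⟨-, hall⟩ i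
        exact ⟨cc, lastAct_oT M.o u cc, hall i.val i.2⟩
      · intro hall
        refine ⟨hΓ, fun i hi => ?_⟩
        obtain ⟨g, hg, hgi⟩ := hall ⟨i, hi⟩
        rw [lastAct_oT] at hg
        injection hg with hg'
        subst hg'
        exact hgi
    · left
      intro w' hw' hmem
      obtain ⟨cc, hcc⟩ := hstep w' hw'
      rw [hcc, mem_XSet_iff M s hreach cc Γ] at hmem
      exact hΓ hmem.1
end

section
/- Let M be a finite concurrent game model over AP with the sets Act_i pairwise disjoint and disjoint from AP, let M̄ be its expansion, let M^T be the unwinding of M with its valuation extended to the action atoms, and let M̄^T be the unwinding of M̄. Then the map h defined by h(w⁰a¹w¹⋯aⁿwⁿ) := ⟨w⁰,*⟩a¹⟨w¹,a¹⟩⋯aⁿ⟨wⁿ,aⁿ⟩ is a bijection from the set of last states of plays in R^fin_{M^T}(w_I^T) onto the set of last states of plays in R^fin_{M̄^T}(w̄_I^T) such that: h(w_I^T) = w̄_I^T; h(o^T(u, b)) = ō^T(h(u), b) for every such reachable state u of M^T and every b ∈ Act_Ag; and for every atom q ∈ AP ∪ ⋃_i Act_i, q holds at u in M^T iff q holds at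 h(u) in M̄^T. -/
/-- The expansion `M̄` of `M`: states `W × (Act_Ag ∪ {*})` (with `*` encoded by `none`),
storing the latest global decision in the target state.  Its atomic propositions are
`AP ⊕ Σ i, Act i` (the original atoms together with the action atoms, the latter being
pairwise disjoint and disjoint from `AP` by the typed encoding). -/
def expand {W Ag AP : Type} {Act : Ag → Type} (M : CGM W Ag AP Act) :
    CGM (W × Option (∀ i, Act i)) Ag (AP ⊕ (Σ i : Ag, Act i)) Act where
  wI := (M.wI, none)
  o := fun wb a => (M.o wb.1 a, some a)
  V := fun wb q =>
    match q with
    | .inl p => M.V wb.1 p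
    | .inr ⟨i, c⟩ => ∃ g : ∀ j, Act j, wb.2 = some g ∧ g i = c

/-- The valuation of `M^T` extended to the action atoms: an original atom `p ∈ AP`
holds at `u` iff it holds at `last u` in `M`; an action atom `c ∈ Act_i` holds at `u`
iff the last global action of `u` exists and has `c` as its `i`-th component. -/
def VTact {W Ag AP : Type} {Act : Ag → Type} (M : CGM W Ag AP Act)
    (u : UnwState W (∀ i, Act i)) (q : AP ⊕ (Σ i : Ag, Act i)) : Prop :=
  match q with
  | .inl p => M.V u.last p
  | .inr ⟨i, c⟩ => ∃ g : ∀ j, Act j, u.lastAct = some g ∧ g i = c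

/-- The map `h(w⁰a¹w¹⋯aⁿwⁿ) := ⟨w⁰,*⟩a¹⟨w¹,a¹⟩⋯aⁿ⟨wⁿ,aⁿ⟩`. -/
def hMap {W Ag : Type} {Act : Ag → Type} (u : UnwState W (∀ i, Act i)) :
    UnwState (W × Option (∀ i, Act i)) (∀ i, Act i) :=
  ⟨(u.head, none), u.rest.map fun aw => (aw.1, (aw.2, some aw.1))⟩

lemma last_hMap {W Ag : Type} {Act : Ag → Type} (u : UnwState W (∀ i, Act i)) :
    (hMap u).last = (u.last, u.lastAct) := by
  unfold hMap UnwState.last UnwState.lastAct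
  simp only [List.getLast?_map]
  cases h : u.rest.getLast? with
  | none => simp
  | some aw => simp

lemma hMap_oT {W Ag AP : Type} {Act : Ag → Type} (M : CGM W Ag AP Act)
    (u : UnwState W (∀ i, Act i)) (b : ∀ i, Act i) :
    hMap (oT M.o u b) = oT (expand M).o (hMap u) b := by
  have h := last_hMap u
  unfold oT
  rw [h]
  unfold hMap expand
  simp

lemma hMap_inj {W Ag : Type} {Act : Ag → Type} :
    Function.Injective (@hMap W Ag Act) := by
  intro u v h
  unfold hMap at h
  cases u; cases v
  simp only [UnwState.mk.injEq, Prod.mk.injEq] at h ⊢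
  refine ⟨h.1.1, ?_⟩
  have := h.2
  have : ∀ (l l' : List ((∀ i, Act i) × W)),
      (l.map fun aw => (aw.1, (aw.2, some aw.1))) =
      (l'.map fun aw => (aw.1, (aw.2, some aw.1))) → l = l' := by
    intro l
    induction l with
    | nil => intro l' h; cases l' <;> simp_all
    | cons a t ih =>
      intro l' h
      cases l' with
      | nil => simp_all
      | cons a' t' =>
        simp only [List.map_cons, List.cons.injEq, Prod.mk.injEq] at h
        obtain ⟨⟨h1, h2, _⟩, h4⟩ := h
        exact by cases a; cases a'; simp_all [ih _ h4]
  exact this _ _ h.2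

/-- `h` is a bijection from the set of last states of plays in
`R^fin_{M^T}(w_I^T)` (= the states of `M^T` reachable from `w_I^T`) onto the set of
last states of plays in `R^fin_{M̄^T}(w̄_I^T)`, it maps `w_I^T` to `w̄_I^T`, commutes
with the outcome functions on reachable states, and preserves all atoms
`q ∈ AP ∪ ⋃ᵢ Act_i`. -/
theorem expansion_unwinding_iso {W Ag AP : Type} {Act : Ag → Type}
    [Fintype W] [Fintype Ag] [Nonempty Ag]
    [∀ i, Fintype (Act i)] [∀ i, Nonempty (Act i)]
    (M : CGM W Ag AP Act) :
    -- bijection between the reachable parts of the unwindings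
    Set.BijOn hMap
      {u : UnwState W (∀ i, Act i) |
        Relation.ReflTransGen (stepT M.o) (initT M) u}
      {ub : UnwState (W × Option (∀ i, Act i)) (∀ i, Act i) |
        Relation.ReflTransGen (stepT (expand M).o) (initT (expand M)) ub} ∧
    -- `h(w_I^T) = w̄_I^T`
    hMap (initT M) = initT (expand M) ∧
    -- `h(o^T(u, b)) = ō^T(h(u), b)` for reachable `u`
    (∀ u : UnwState W (∀ i, Act i), Relation.ReflTransGen (stepT M.o) (initT M) u →
      ∀ b : ∀ i, Act i, hMap (oT M.o u b) = oT (expand M).o (hMap u) b) ∧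
    -- atoms are preserved: `q` holds at `u` in `M^T` iff `q` holds at `h(u)` in `M̄^T`
    (∀ u : UnwState W (∀ i, Act i), Relation.ReflTransGen (stepT M.o) (initT M) u →
      ∀ q : AP ⊕ (Σ i : Ag, Act i),
        (VTact M u q ↔ (expand M).V (hMap u).last q)) := by
  have hinit : hMap (initT M) = initT (expand M) := by
    unfold hMap initT expand; rfl
  refine ⟨⟨?_, ?_, ?_⟩, hinit, fun u _ b => hMap_oT M u b, ?_⟩
  · -- MapsTo
    intro u hu
    induction hu with
    | refl => exact hinit ▸ Relation.ReflTransGen.refl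
    | tail _ h ih =>
      obtain ⟨a, rfl⟩ := h
      exact ih.tail ⟨a, (hMap_oT M _ a)⟩
  · exact fun u _ v _ h => hMap_inj h
  · -- SurjOn
    intro ub hub
    induction hub with
    | refl => exact ⟨initT M, Relation.ReflTransGen.refl, hinit⟩
    | tail _ h ih =>
      obtain ⟨u, hu, rfl⟩ := ih
      obtain ⟨a, rfl⟩ := h
      exact ⟨oT M.o u a, hu.tail ⟨a, rfl⟩, hMap_oT M u a⟩
  · intro u _ q
    rw [last_hMap]
    cases q with
    | inl p => simp [VTact, expand]
    | inr ic => obtain ⟨i, c⟩ := ic; simp [VTact, expand]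
end

section
/- Soundness of axiom P4 (guarded transitivity): in every extended CGM M of form (1), for every Γ ⊆ Ag and all PLTL formulas φ, ψ, χ, the state formula φ <_Γ ψ ∧ ψ <_Γ χ ∧ ∃◯ψ ⇒ φ <_Γ χ is valid in M. -/
namespace CGM

variable {W Ag AP : Type} {Act : Ag → Type}

/-- `v ∈ R^∞_M(w_I)`: an infinite play of `M` starting at the initial state. -/
def InfPlay (M : CGM W Ag AP Act) (v : ℕ → W) : Prop :=
  v 0 = M.wI ∧ ∀ k : ℕ, ∃ a : ∀ i, Act i, v (k + 1) = M.o (v k) a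

/-- `w ∈ R^∞_M(v⁰…v^k)`: the infinite continuations of the finite play `v⁰…v^k`
(a finite play is represented by an infinite sequence `v` together with the index `k`
of its last position). -/
def Ext (M : CGM W Ag AP Act) (v : ℕ → W) (k : ℕ) (w : ℕ → W) : Prop :=
  (∀ j ≤ k, w j = v j) ∧ ∀ j : ℕ, ∃ a : ∀ i, Act i, w (j + 1) = M.o (w j) a

end CGM

/-- PLTL (linear-time temporal logic with past) formulas:
`⊥ | p | φ⇒φ | ◯φ | φUφ | Yφ | φSφ`. -/
inductive PLTL (AP : Type) : Type where
  | fls : PLTL AP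
  | atom (p : AP) : PLTL AP
  | imp (φ ψ : PLTL AP) : PLTL AP
  | next (φ : PLTL AP) : PLTL AP
  | untl (φ ψ : PLTL AP) : PLTL AP
  | yest (φ : PLTL AP) : PLTL AP
  | snce (φ ψ : PLTL AP) : PLTL AP
  deriving DecidableEq

namespace PLTL

variable {W AP : Type}

/-- Satisfaction of a PLTL formula at position `k` of the infinite play `v`,
relative to the valuation `V`. -/
def Sat (V : W → AP → Prop) : PLTL AP → (ℕ → W) → ℕ → Prop
  | fls, _, _ => False
  | atom p, v, k => V (v k) p
  | imp φ ψ, v, k => Sat V φ v k → Sat V ψ v k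
  | next φ, v, k => Sat V φ v (k + 1)
  | untl φ ψ, v, k => ∃ n : ℕ, Sat V ψ v (k + n) ∧ ∀ m < n, Sat V φ v (k + m)
  | yest φ, v, k => k ≠ 0 ∧ Sat V φ v (k - 1)
  | snce φ ψ, v, k => ∃ n ≤ k, Sat V ψ v (k - n) ∧ ∀ m < n, Sat V φ v (k - m)

/-- `¬φ := φ ⇒ ⊥`. -/
def neg (φ : PLTL AP) : PLTL AP := φ.imp fls
/-- `⊤ := ¬⊥`. -/
def top : PLTL AP := neg fls
/-- `φ ∧ ψ`. -/
def and (φ ψ : PLTL AP) : PLTL AP := neg (φ.imp ψ.neg)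
/-- `φ ∨ ψ`. -/
def or (φ ψ : PLTL AP) : PLTL AP := φ.neg.imp ψ
/-- `◇φ := ⊤ U φ`. -/
def ev (φ : PLTL AP) : PLTL AP := top.untl φ
/-- `□φ := ¬◇¬φ`. -/
def alw (φ : PLTL AP) : PLTL AP := neg (ev (neg φ))
/-- `◇⁻φ := ⊤ S φ` (sometime in the past). -/
def evPast (φ : PLTL AP) : PLTL AP := top.snce φ
/-- `□⁻φ := ¬◇⁻¬φ` (always in the past). -/
def alwPast (φ : PLTL AP) : PLTL AP := neg (evPast (neg φ))
/-- `I := ¬Y⊤` (the beginning of time). -/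
def start : PLTL AP := neg (yest top)
/-- `[φ] := □⁻(I ⇒ φ)`. -/
def bracket (φ : PLTL AP) : PLTL AP := alwPast (start.imp φ)

end PLTL

section Pref

variable {W Ag AP : Type} {Act : Ag → Type}

/-- Satisfaction of the binary preference construct at the finite play `v⁰…v^k`:
all pairs of infinite continuations satisfying the respective operands at position
`k + 1 = |v⁰…v^k|` are related by `R`. -/
def PrefSat (M : CGM W Ag AP Act) (R : (ℕ → W) → (ℕ → W) → Prop)
    (φ₁ φ₂ : PLTL AP) (v : ℕ → W) (k : ℕ) : Prop :=
  ∀ w₁ w₂ : ℕ → W, M.Ext v k w₁ → M.Ext v k w₂ →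
    PLTL.Sat M.V φ₁ w₁ (k + 1) → PLTL.Sat M.V φ₂ w₂ (k + 1) → R w₁ w₂

/-- `σ = true` encodes the operator `<`, `σ = false` encodes `⋪`:
`SigRel σ R` is `R` itself resp. the complement of `R`. -/
def SigRel {α : Type} (σ : Bool) (R : α → α → Prop) : α → α → Prop :=
  fun a b => if σ then R a b else ¬ R a b

/-- `M,(v⁰…v^k) ⊨ φ σ_Γ ψ`, i.e. `⋀_{i∈Γ} φ σ_i ψ`. -/
def PrefG (M : CGM W Ag AP Act) (pref : Ag → (ℕ → W) → (ℕ → W) → Prop)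
    (σ : Bool) (Γ : Set Ag) (φ ψ : PLTL AP) (v : ℕ → W) (k : ℕ) : Prop :=
  ∀ i ∈ Γ, PrefSat M (SigRel σ (pref i)) φ ψ v k

/-- An extended CGM of form (1): each `pref i` is a strict partial order
(irreflexive and transitive) on the set `R^∞_M(w_I)` of infinite plays. -/
def Form1 (M : CGM W Ag AP Act) (pref : Ag → (ℕ → W) → (ℕ → W) → Prop) : Prop :=
  ∀ i : Ag,
    (∀ v : ℕ → W, M.InfPlay v → ¬ pref i v v) ∧
    (∀ u v w : ℕ → W, M.InfPlay u → M.InfPlay v → M.InfPlay w →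
      pref i u v → pref i v w → pref i u w)

end Pref

/-- **soundness of P4, guarded transitivity.** In every extended CGM of
form (1), the state formula `φ <_Γ ψ ∧ ψ <_Γ χ ∧ ∃◯ψ ⇒ φ <_Γ χ` holds at every
finite play. -/
theorem P4_sound {W Ag AP : Type} {Act : Ag → Type}
    [Fintype Ag] [Nonempty Ag] [∀ i, Nonempty (Act i)]
    (M : CGM W Ag AP Act) (pref : Ag → (ℕ → W) → (ℕ → W) → Prop)
    (h1 : Form1 M pref) (Γ : Set Ag) (φ ψ χ : PLTL AP)
    (v : ℕ → W) (k : ℕ) (hv : M.InfPlay v) :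
    PrefG M pref true Γ φ ψ v k →
    PrefG M pref true Γ ψ χ v k →
    (∃ w : ℕ → W, M.Ext v k w ∧ PLTL.Sat M.V ψ w (k + 1)) →
    PrefG M pref true Γ φ χ v k := by
  intro hφψ hψχ ⟨w, hw, hψw⟩ i hi w₁ w₂ hw₁ hw₂ hφ₁ hχ₂
  have inf : ∀ u : ℕ → W, M.Ext v k u → M.InfPlay u := by
    intro u hu
    exact ⟨(hu.1 0 (Nat.zero_le _)).trans hv.1, hu.2⟩
  have h12 : pref i w₁ w := hφψ i hi w₁ w hw₁ hw hφ₁ hψw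
  have h23 : pref i w w₂ := hψχ i hi w w₂ hw hw₂ hψw hχ₂
  have := (h1 i).2 w₁ w w₂ (inf w₁ hw₁) (inf w hw) (inf w₂ hw₂) h12 h23
  simpa [SigRel] using this
end

section
/- Soundness of axiom P6 (players stick to their preferences): in every extended CGM M of form (1), for every Γ ⊆ Ag, σ ∈ {<, ⋪}, and PLTL formulas φ, ψ, the state formula [φ] σ_Γ [ψ] ⇔ ∀□([φ] σ_Γ [ψ]) is valid in M. -/
lemma bracket_iff {W AP : Type} (V : W → AP → Prop) (φ : PLTL AP) (w : ℕ → W) (m : ℕ) :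
    PLTL.Sat V φ.bracket w m ↔ PLTL.Sat V φ w 0 := by
  simp only [PLTL.bracket, PLTL.alwPast, PLTL.evPast, PLTL.neg, PLTL.start, PLTL.top, PLTL.Sat]
  constructor
  · intro h
    by_contra hφ
    exact h ⟨m, le_refl m, fun hs => hφ (Nat.sub_self m ▸ hs (by simp [Nat.sub_self])),
      fun _ _ f => f⟩
  · rintro h ⟨n, hn, hns, -⟩
    by_cases hmn : m - n = 0
    · exact hns (fun _ => hmn ▸ h)
    · exact hns (fun hc => absurd ⟨hmn, fun f => f⟩ hc)

/-- Extend a finite play `v⁰…v^k` to an infinite play, using a fixed action profile. -/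
def extendPlay {W Ag AP : Type} {Act : Ag → Type} (M : CGM W Ag AP Act)
    (v : ℕ → W) (k : ℕ) (a₀ : ∀ i, Act i) : ℕ → W
  | 0 => v 0
  | j + 1 => if j + 1 ≤ k then v (j + 1) else M.o (extendPlay M v k a₀ j) a₀

lemma extendPlay_ext {W Ag AP : Type} {Act : Ag → Type} (M : CGM W Ag AP Act)
    (v : ℕ → W) (k : ℕ) (a₀ : ∀ i, Act i) (hv : M.InfPlay v) :
    M.Ext v k (extendPlay M v k a₀) := by
  have hag : ∀ j ≤ k, extendPlay M v k a₀ j = v j := by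
    intro j hj
    cases j with
    | zero => rfl
    | succ j => simp [extendPlay, hj]
  refine ⟨hag, fun j => ?_⟩
  by_cases hj : j + 1 ≤ k
  · obtain ⟨a, ha⟩ := hv.2 j
    refine ⟨a, ?_⟩
    rw [hag _ hj, hag _ (Nat.le_of_succ_le hj), ha]
  · exact ⟨a₀, by simp [extendPlay, hj]⟩

/-- **soundness of P6.** In every extended CGM of form (1), the state
formula `[φ] σ_Γ [ψ] ⇔ ∀□([φ] σ_Γ [ψ])` holds at every finite play `v⁰…v^k`:
the preference statement about the initial objectives holds there iff it holds at
every position `k + n` of every infinite continuation `w` of `v⁰…v^k`. -/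
theorem P6_sound {W Ag AP : Type} {Act : Ag → Type}
    [Fintype Ag] [Nonempty Ag] [∀ i, Nonempty (Act i)]
    (M : CGM W Ag AP Act) (pref : Ag → (ℕ → W) → (ℕ → W) → Prop)
    (h1 : Form1 M pref) (Γ : Set Ag) (σ : Bool) (φ ψ : PLTL AP)
    (v : ℕ → W) (k : ℕ) (hv : M.InfPlay v) :
    PrefG M pref σ Γ φ.bracket ψ.bracket v k ↔
      (∀ w : ℕ → W, M.Ext v k w → ∀ n : ℕ,
        PrefG M pref σ Γ φ.bracket ψ.bracket w (k + n)) := by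
  constructor
  · intro h w hw n i hi w₁ w₂ e1 e2 s1 s2
    have he1 : M.Ext v k w₁ :=
      ⟨fun j hj => (e1.1 j (le_trans hj (Nat.le_add_right k n))).trans (hw.1 j hj), e1.2⟩
    have he2 : M.Ext v k w₂ :=
      ⟨fun j hj => (e2.1 j (le_trans hj (Nat.le_add_right k n))).trans (hw.1 j hj), e2.2⟩
    exact h i hi w₁ w₂ he1 he2
      ((bracket_iff _ _ _ _).mpr ((bracket_iff _ _ _ _).mp s1))
      ((bracket_iff _ _ _ _).mpr ((bracket_iff _ _ _ _).mp s2))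
  · intro h i hi w₁ w₂ e1 e2 s1 s2
    obtain ⟨a₀⟩ : Nonempty (∀ i, Act i) := ⟨fun i => Classical.arbitrary _⟩
    have hw := extendPlay_ext M v k a₀ hv
    have he1 : M.Ext (extendPlay M v k a₀) k w₁ :=
      ⟨fun j hj => (e1.1 j hj).trans (hw.1 j hj).symm, e1.2⟩
    have he2 : M.Ext (extendPlay M v k a₀) k w₂ :=
      ⟨fun j hj => (e2.1 j hj).trans (hw.1 j hj).symm, e2.2⟩
    exact h _ hw 0 i hi w₁ w₂ he1 he2 s1 s2
end

section
/- Unsoundness of unguarded transitivity: there exist an extended CGM M of form (1), a player i ∈ Ag, PLTL formulas φ₁, φ₂, and a finite play v ∈ R^fin_M(w_I) such that M,v ⊨ φ₁ <_i ⊥ and M,v ⊨ ⊥ <_i φ₂, but M,v ⊭ φ₁ <_i φ₂. In particular, the schema φ <_Γ ψ ∧ ψ <_Γ χ ⇒ φ <_Γ χ (the transitivity axiom P4 with the conjunct ∃◯ψ removed) is not valid in all extended CGMs of form (1). -/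
/-- **unsoundness of unguarded transitivity.** There is an extended CGM
of form (1), a player `i`, PLTL formulas `φ₁, φ₂` and a finite play at which
`φ₁ <_i ⊥` and `⊥ <_i φ₂` hold but `φ₁ <_i φ₂` fails; in particular, the schema
`φ <_Γ ψ ∧ ψ <_Γ χ ⇒ φ <_Γ χ` (P4 without the conjunct `∃◯ψ`) is not valid in all
extended CGMs of form (1). -/
theorem unguarded_transitivity_unsound :
    (∃ (W Ag AP : Type) (Act : Ag → Type) (M : CGM W Ag AP Act)
        (pref : Ag → (ℕ → W) → (ℕ → W) → Prop) (i : Ag) (φ₁ φ₂ : PLTL AP)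
        (v : ℕ → W) (k : ℕ),
      Form1 M pref ∧ M.InfPlay v ∧
      PrefSat M (SigRel true (pref i)) φ₁ PLTL.fls v k ∧
      PrefSat M (SigRel true (pref i)) PLTL.fls φ₂ v k ∧
      ¬ PrefSat M (SigRel true (pref i)) φ₁ φ₂ v k) ∧
    ¬ (∀ (W Ag AP : Type) (Act : Ag → Type) (M : CGM W Ag AP Act)
        (pref : Ag → (ℕ → W) → (ℕ → W) → Prop), Form1 M pref →
        ∀ (Γ : Set Ag) (φ ψ χ : PLTL AP) (v : ℕ → W) (k : ℕ), M.InfPlay v →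
          PrefG M pref true Γ φ ψ v k → PrefG M pref true Γ ψ χ v k →
          PrefG M pref true Γ φ χ v k) := by
  classical
  -- trivial model on Unit with empty preference relation
  set M : CGM Unit Unit Unit (fun _ => Unit) :=
    { wI := (), o := fun _ _ => (), V := fun _ _ => True } with hM
  have hExt : ∀ (v : ℕ → Unit) (k : ℕ), M.Ext v k (fun _ => ()) := by
    intro v k
    refine ⟨fun j _ => rfl, fun j => ⟨fun _ => (), rfl⟩⟩
  have hTop : ∀ (w : ℕ → Unit) (n : ℕ), PLTL.Sat M.V (PLTL.top (AP := Unit)) w n := by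
    intro w n
    simp [PLTL.top, PLTL.neg, PLTL.Sat]
  have hForm1 : Form1 M (fun _ _ _ => False) := by
    intro i
    exact ⟨fun _ _ h => h, fun _ _ _ _ _ _ h _ => h.elim⟩
  have hPlay : M.InfPlay (fun _ => ()) := ⟨rfl, fun k => ⟨fun _ => (), rfl⟩⟩
  have h1 : PrefSat M (SigRel true ((fun (_ : Unit) (_ _ : ℕ → Unit) => False) ()))
      (PLTL.top) PLTL.fls (fun _ => ()) 0 := by
    intro w₁ w₂ _ _ _ h2
    exact h2.elim
  have h2 : PrefSat M (SigRel true ((fun (_ : Unit) (_ _ : ℕ → Unit) => False) ()))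
      PLTL.fls (PLTL.top) (fun _ => ()) 0 := by
    intro w₁ w₂ _ _ h1 _
    exact h1.elim
  have h3 : ¬ PrefSat M (SigRel true ((fun (_ : Unit) (_ _ : ℕ → Unit) => False) ()))
      (PLTL.top) (PLTL.top) (fun _ => ()) 0 := by
    intro h
    have := h (fun _ => ()) (fun _ => ()) (hExt _ 0) (hExt _ 0) (hTop _ _) (hTop _ _)
    simpa [SigRel] using this
  constructor
  · exact ⟨Unit, Unit, Unit, fun _ => Unit, M, fun _ _ _ => False, (),
      PLTL.top, PLTL.top, fun _ => (), 0, hForm1, hPlay, h1, h2, h3⟩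
  · intro H
    have := H Unit Unit Unit (fun _ => Unit) M (fun _ _ _ => False) hForm1
      Set.univ PLTL.top PLTL.fls PLTL.top (fun _ => ()) 0 hPlay
      (fun i _ => h1) (fun i _ => h2)
    exact h3 (this () (Set.mem_univ ()))
end

section
/- Soundness of axiom O1: in every extended CGM M of form (2), for every Γ ⊆ Ag, every θ ∈ Θ_{I,Γ}, every σ ∈ {<, ⋪}, and all PLTL formulas φ, ψ, the state formulas ∃◯(φ ∧ [θ]) ⇒ (φ σ_Γ ψ ⇔ (φ ∨ [θ]) σ_Γ ψ) and ∃◯(ψ ∧ [θ]) ⇒ (φ σ_Γ ψ ⇔ φ σ_Γ (ψ ∨ [θ])) are valid in M. -/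
section Form2

variable {W Ag AP : Type} {Act : Ag → Type}

/-- The conjunction `⋀_{i∈Γ} f i` of the designated objectives of the members of `Γ`. -/
noncomputable def finsetAndP (Γ : Finset Ag) (f : Ag → PLTL AP) : PLTL AP :=
  (Γ.toList.map f).foldr PLTL.and PLTL.top

/-- `Θ_{I,Γ} := { ⋀_{i∈Γ} θ_i : θ_i ∈ Θ_{I,i} for each i ∈ Γ }`. -/
noncomputable def ThetaG (Θ : Ag → Finset (PLTL AP)) (Γ : Finset Ag) :
    Set (PLTL AP) :=
  { θ | ∃ f : Ag → PLTL AP, (∀ i ∈ Γ, f i ∈ Θ i) ∧ θ = finsetAndP Γ f }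

/-- An extended CGM of form (2): an extended CGM of form (1) together with, for each
player `i`, a finite set `Θ i` of PLTL formulas and a relation `prec i` on it, such
that the classes `⟦θ⟧ = {w ∈ R^∞_M(w_I) : M,w,0 ⊨ θ}` of distinct `θ ∈ Θ i` are
disjoint, the classes cover `R^∞_M(w_I)`, and on the classes the preference `pref i`
is induced by `prec i`. -/
def Form2 (M : CGM W Ag AP Act) (pref : Ag → (ℕ → W) → (ℕ → W) → Prop)
    (Θ : Ag → Finset (PLTL AP)) (prec : Ag → PLTL AP → PLTL AP → Prop) : Prop :=
  Form1 M pref ∧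
  -- the classes cover `R^∞_M(w_I)`
  (∀ i : Ag, ∀ v : ℕ → W, M.InfPlay v → ∃ θ ∈ Θ i, PLTL.Sat M.V θ v 0) ∧
  -- distinct objectives define disjoint classes
  (∀ i : Ag, ∀ θ ∈ Θ i, ∀ θ' ∈ Θ i, ∀ v : ℕ → W, M.InfPlay v →
    PLTL.Sat M.V θ v 0 → PLTL.Sat M.V θ' v 0 → θ = θ') ∧
  -- on the classes, `pref i` is induced by `prec i`
  (∀ i : Ag, ∀ θ ∈ Θ i, ∀ θ' ∈ Θ i, ∀ v v' : ℕ → W, M.InfPlay v → M.InfPlay v' →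
    PLTL.Sat M.V θ v 0 → PLTL.Sat M.V θ' v' 0 → (pref i v v' ↔ prec i θ θ'))

/-- `M,(v⁰…v^k) ⊨ φ σ_Γ ψ` for a coalition `Γ` given as a finite set. -/
def PrefGF (M : CGM W Ag AP Act) (pref : Ag → (ℕ → W) → (ℕ → W) → Prop)
    (σ : Bool) (Γ : Finset Ag) (φ ψ : PLTL AP) (v : ℕ → W) (k : ℕ) : Prop :=
  ∀ i ∈ Γ, PrefSat M (SigRel σ (pref i)) φ ψ v k

end Form2


section O1Helpers

variable {W Ag AP : Type} {Act : Ag → Type}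

lemma sat_top' (V : W → AP → Prop) (w : ℕ → W) (k : ℕ) :
    PLTL.Sat V (PLTL.top (AP := AP)) w k := by
  simp [PLTL.top, PLTL.neg, PLTL.Sat]

lemma sat_and' {V : W → AP → Prop} {a b : PLTL AP} {w : ℕ → W} {k : ℕ} :
    PLTL.Sat V (a.and b) w k ↔ PLTL.Sat V a w k ∧ PLTL.Sat V b w k := by
  simp only [PLTL.and, PLTL.neg, PLTL.Sat]; tauto

lemma sat_or' {V : W → AP → Prop} {a b : PLTL AP} {w : ℕ → W} {k : ℕ} :
    PLTL.Sat V (a.or b) w k ↔ PLTL.Sat V a w k ∨ PLTL.Sat V b w k := by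
  simp only [PLTL.or, PLTL.neg, PLTL.Sat]; tauto

lemma sat_bracket' {V : W → AP → Prop} {θ : PLTL AP} {w : ℕ → W} {n : ℕ} :
    PLTL.Sat V θ.bracket w n ↔ PLTL.Sat V θ w 0 := by
  simp only [PLTL.bracket, PLTL.alwPast, PLTL.evPast, PLTL.start, PLTL.top, PLTL.neg,
    PLTL.Sat]
  constructor
  · intro h
    by_contra h0
    apply h
    refine ⟨n, le_refl n, fun hi => ?_, fun m _ hF => hF.elim⟩
    apply h0
    have := hi (fun h' => absurd (by simpa using h'.1) (fun hc => hc))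
    simpa [Nat.sub_self] using this
  · rintro hθ ⟨m, hm, hcon, -⟩
    apply hcon
    intro hz
    rcases Nat.eq_zero_or_pos (n - m) with h0 | hpos
    · rw [h0]; exact hθ
    · exact (hz ⟨Nat.pos_iff_ne_zero.mp hpos, fun hF => hF⟩).elim

lemma sat_foldr' {V : W → AP → Prop} {f : Ag → PLTL AP} (l : List Ag)
    {w : ℕ → W} {k : ℕ} :
    PLTL.Sat V ((l.map f).foldr PLTL.and PLTL.top) w k ↔
      ∀ i ∈ l, PLTL.Sat V (f i) w k := by
  induction l with
  | nil => simpa using sat_top' V w k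
  | cons a l ih => simp [sat_and', ih]

lemma sat_finsetAndP' {V : W → AP → Prop} {Γ : Finset Ag} {f : Ag → PLTL AP}
    {w : ℕ → W} {k : ℕ} :
    PLTL.Sat V (finsetAndP Γ f) w k ↔ ∀ i ∈ Γ, PLTL.Sat V (f i) w k := by
  unfold finsetAndP
  rw [sat_foldr']
  simp [Finset.mem_toList]

lemma ext_infPlay' {M : CGM W Ag AP Act} {v w : ℕ → W} {k : ℕ}
    (hv : M.InfPlay v) (hw : M.Ext v k w) : M.InfPlay w :=
  ⟨by rw [hw.1 0 (Nat.zero_le k)]; exact hv.1, hw.2⟩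

/-- Two infinite plays in the same objective class are interchangeable for `pref i`. -/
lemma pref_congr' {M : CGM W Ag AP Act} {pref : Ag → (ℕ → W) → (ℕ → W) → Prop}
    {Θ : Ag → Finset (PLTL AP)} {prec : Ag → PLTL AP → PLTL AP → Prop}
    (h2 : Form2 M pref Θ prec) {i : Ag} {θ : PLTL AP} (hθ : θ ∈ Θ i)
    {w₁ w₂ : ℕ → W} (h1 : M.InfPlay w₁) (h2' : M.InfPlay w₂)
    (s1 : PLTL.Sat M.V θ w₁ 0) (s2 : PLTL.Sat M.V θ w₂ 0)
    {u : ℕ → W} (hu : M.InfPlay u) :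
    (pref i w₁ u ↔ pref i w₂ u) ∧ (pref i u w₁ ↔ pref i u w₂) := by
  obtain ⟨θu, hθu, su⟩ := h2.2.1 i u hu
  constructor
  · rw [h2.2.2.2 i θ hθ θu hθu w₁ u h1 hu s1 su,
      h2.2.2.2 i θ hθ θu hθu w₂ u h2' hu s2 su]
  · rw [h2.2.2.2 i θu hθu θ hθ u w₁ hu h1 su s1,
      h2.2.2.2 i θu hθu θ hθ u w₂ hu h2' su s2]

end O1Helpers

/-- **soundness of O1.** In every extended CGM of form (2), for every
`Γ ⊆ Ag`, every `θ = ⋀_{i∈Γ} θ_i ∈ Θ_{I,Γ}`, every `σ ∈ {<,⋪}` and all PLTL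
formulas `φ, ψ`, the state formulas
`∃◯(φ ∧ [θ]) ⇒ (φ σ_Γ ψ ⇔ (φ ∨ [θ]) σ_Γ ψ)` and
`∃◯(ψ ∧ [θ]) ⇒ (φ σ_Γ ψ ⇔ φ σ_Γ (ψ ∨ [θ]))` hold at every finite play. -/
theorem O1_sound {W Ag AP : Type} {Act : Ag → Type}
    [Fintype Ag] [Nonempty Ag] [∀ i, Nonempty (Act i)]
    (M : CGM W Ag AP Act) (pref : Ag → (ℕ → W) → (ℕ → W) → Prop)
    (Θ : Ag → Finset (PLTL AP)) (prec : Ag → PLTL AP → PLTL AP → Prop)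
    (h2 : Form2 M pref Θ prec)
    (Γ : Finset Ag) (f : Ag → PLTL AP) (hf : ∀ i ∈ Γ, f i ∈ Θ i)
    (σ : Bool) (φ ψ : PLTL AP)
    (v : ℕ → W) (k : ℕ) (hv : M.InfPlay v) :
    ((∃ w : ℕ → W, M.Ext v k w ∧
        PLTL.Sat M.V (φ.and (finsetAndP Γ f).bracket) w (k + 1)) →
      (PrefGF M pref σ Γ φ ψ v k ↔
        PrefGF M pref σ Γ (φ.or (finsetAndP Γ f).bracket) ψ v k)) ∧
    ((∃ w : ℕ → W, M.Ext v k w ∧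
        PLTL.Sat M.V (ψ.and (finsetAndP Γ f).bracket) w (k + 1)) →
      (PrefGF M pref σ Γ φ ψ v k ↔
        PrefGF M pref σ Γ φ (ψ.or (finsetAndP Γ f).bracket) v k)) := by
  set θ := finsetAndP Γ f with hθdef
  constructor
  · rintro ⟨ws, hwse, hwss⟩
    obtain ⟨hφs, hbrs⟩ := sat_and'.mp hwss
    have hθs : ∀ i ∈ Γ, PLTL.Sat M.V (f i) ws 0 :=
      sat_finsetAndP'.mp (sat_bracket'.mp hbrs)
    constructor
    · intro H i hi w₁ w₂ e1 e2 s1 s2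
      rcases sat_or'.mp s1 with hφ1 | hb1
      · exact H i hi w₁ w₂ e1 e2 hφ1 s2
      · have hf1 : PLTL.Sat M.V (f i) w₁ 0 := sat_finsetAndP'.mp (sat_bracket'.mp hb1) i hi
        have key := (pref_congr' h2 (hf i hi) (ext_infPlay' hv e1) (ext_infPlay' hv hwse)
          hf1 (hθs i hi) (ext_infPlay' hv e2)).1
        have hws := H i hi ws w₂ hwse e2 hφs s2
        unfold SigRel at *
        cases σ <;> simp_all
    · intro H i hi w₁ w₂ e1 e2 s1 s2
      exact H i hi w₁ w₂ e1 e2 (sat_or'.mpr (Or.inl s1)) s2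
  · rintro ⟨ws, hwse, hwss⟩
    obtain ⟨hψs, hbrs⟩ := sat_and'.mp hwss
    have hθs : ∀ i ∈ Γ, PLTL.Sat M.V (f i) ws 0 :=
      sat_finsetAndP'.mp (sat_bracket'.mp hbrs)
    constructor
    · intro H i hi w₁ w₂ e1 e2 s1 s2
      rcases sat_or'.mp s2 with hψ2 | hb2
      · exact H i hi w₁ w₂ e1 e2 s1 hψ2
      · have hf2 : PLTL.Sat M.V (f i) w₂ 0 := sat_finsetAndP'.mp (sat_bracket'.mp hb2) i hi
        have key := (pref_congr' h2 (hf i hi) (ext_infPlay' hv e2) (ext_infPlay' hv hwse)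
          hf2 (hθs i hi) (ext_infPlay' hv e1)).2
        have hws := H i hi w₁ ws e1 hwse s1 hψs
        unfold SigRel at *
        cases σ <;> simp_all
    · intro H i hi w₁ w₂ e1 e2 s1 s2
      exact H i hi w₁ w₂ e1 e2 s1 (sat_or'.mpr (Or.inl s2))
end
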